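/- (Identity (3.20): second moment of the position cocycle under KQ.) Let a(ω,u,α,v) = α and b(ω,u) = ∫_ℝ α² (∫_Λ κ^ω_{0,u} Φ^ω(0,u,α,v) dμ^ω_α(v)) dα. Then, as an equality in [0,∞], ⟨a²⟩_{KQ} = (1/2) ⟨b⟩_Q, i.e. Z^{−1} ∫_Ω dP(ω) ∫_Λ dμ^ω_0(u) (κ^ω_{0,u})^{−1} ∫_0^∞ α² dα ∫_Λ κ^ω_{0,u} Φ^ω(0,u,α,v) dμ^ω_α(v) = (1/2) ⟨b⟩_Q. In particular, if ⟨b⟩_Q < ∞ then a ∈ L²(KQ). -/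

import Mathlib

open MeasureTheory ProbabilityTheory Set
open scoped ENNReal

/-!
After cancelling `κ`, both sides are integrals of `α² J(ω, u, α)` over `P ⊗ μ_0 ⊗ dα`, where
`J(ω, u, α) = ∫ Φ(ω, 0, u, α, v) dμ^ω_α(v)` is the jump density from level `0` to level `α`. The
contributions of `α` and `-α` agree: shifting the environment by `α` preserves `P`, carries the
jump `0 → -α` to a jump `α → 0`, and the symmetry of `Φ` reverses it into a jump `0 → α`.
So the integral over `ℝ` is twice the integral over `(0, ∞)`.
-/

theorem ProbabilityTheory.Kernel.isSFiniteKernel_of_isFiniteMeasure {α β : Type*}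
    [MeasurableSpace α] [MeasurableSpace β] (κ : Kernel α β) [∀ a, IsFiniteMeasure (κ a)] :
    IsSFiniteKernel κ := by
  classical
  set N : α → ℕ := fun a => ⌊(κ a univ).toReal⌋₊
  have hN : Measurable N := (κ.measurable_coe .univ).ennreal_toReal.nat_floor
  have hA n : MeasurableSet (N ⁻¹' {n}) := hN (measurableSet_singleton n)
  refine ⟨⟨fun n => κ.piecewise (hA n) 0, fun n => ⟨⟨n + 1, by simp, fun a => ?_⟩⟩, ?_⟩⟩
  · rw [Kernel.piecewise_apply]
    split_ifs with ha
    · obtain rfl : N a = n := ha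
      rw [← ENNReal.ofReal_toReal (measure_ne_top (κ a) univ)]
      refine (ENNReal.ofReal_le_ofReal (Nat.lt_floor_add_one (κ a univ).toReal).le).trans_eq ?_
      rw [ENNReal.ofReal_add (by positivity) zero_le_one]
      simp [N]
    · simp
  · ext a s hs
    simp_rw [Kernel.sum_apply' _ _ hs, Kernel.piecewise_apply, mem_preimage, mem_singleton_iff,
      eq_comm (a := N a), apply_ite (fun m : Measure β => m s)]
    simp

theorem lintegral_eq_setLIntegral_Ioi_add_comp_neg (g : ℝ → ℝ≥0∞) :
    ∫⁻ x, g x = (∫⁻ x in Ioi 0, g x) + ∫⁻ x in Ioi 0, g (-x) := by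
  have hneg : ∫⁻ x in Ioi 0, g (-x) = ∫⁻ x in Iio 0, g x := by
    simpa using (Measure.measurePreserving_neg volume).setLIntegral_comp_preimage_emb
      (Homeomorph.neg ℝ).measurableEmbedding g (Iio 0)
  rw [hneg, add_comm, setLIntegral_congr Ioi_ae_eq_Ici,
    ← lintegral_union measurableSet_Ici (Iio_disjoint_Ici le_rfl), Iio_union_Ici,
    Measure.restrict_univ]

theorem lintegral_lintegral_eq_two_mul_lintegral_setLIntegral_Ioi {X : Type*} [MeasurableSpace X]
    (ρ : Measure X) [SFinite ρ] {G : X → ℝ → ℝ≥0∞} (hG : Measurable (Function.uncurry G))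
    (hGneg : ∀ β, ∫⁻ x, G x (-β) ∂ρ = ∫⁻ x, G x β ∂ρ) :
    ∫⁻ x, (∫⁻ α, G x α) ∂ρ = 2 * ∫⁻ x, (∫⁻ α in Ioi 0, G x α) ∂ρ := by
  have hGneg_meas : Measurable (Function.uncurry fun x α => G x (-α)) :=
    hG.comp (measurable_fst.prodMk measurable_snd.neg)
  calc ∫⁻ x, (∫⁻ α, G x α) ∂ρ
      = ∫⁻ x, (∫⁻ α in Ioi 0, G x α + G x (-α)) ∂ρ := by
        refine lintegral_congr fun x => ?_
        rw [lintegral_eq_setLIntegral_Ioi_add_comp_neg, lintegral_add_left]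
        exact hG.comp measurable_prodMk_left
    _ = ∫⁻ α in Ioi 0, ∫⁻ x, (G x α + G x (-α)) ∂ρ :=
        lintegral_lintegral_swap (hG.add hGneg_meas).aemeasurable
    _ = ∫⁻ α in Ioi 0, 2 * ∫⁻ x, G x α ∂ρ := by
        refine lintegral_congr fun α => ?_
        rw [lintegral_add_left (f := fun x => G x α) (hG.comp measurable_prodMk_right), hGneg,
          two_mul]
    _ = 2 * ∫⁻ x, (∫⁻ α in Ioi 0, G x α) ∂ρ := by
        rw [lintegral_const_mul _ hG.lintegral_prod_left, lintegral_lintegral_swap hG.aemeasurable]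

theorem Measurable.lintegral_prod_right_measure {α β : Type*} [MeasurableSpace α]
    [MeasurableSpace β] {f : α × β → ℝ≥0∞} (hf : Measurable f) {m : α → Measure β}
    (hm : Measurable m) [∀ a, IsFiniteMeasure (m a)] : Measurable fun a => ∫⁻ b, f (a, b) ∂m a :=
  have := (Kernel.mk m hm).isSFiniteKernel_of_isFiniteMeasure
  hf.lintegral_kernel_prod_right' (κ := ⟨m, hm⟩)

theorem ofReal_inv_mul_lintegral_mul_lintegral_ofReal_mul {A Λ : Type*} [MeasurableSpace A]
    [MeasurableSpace Λ] {c : ℝ} (hc : 0 < c) (m : Measure A) (ν : A → Measure Λ)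
    (w : A → ℝ≥0∞) (f : A → Λ → ℝ) :
    ENNReal.ofReal c⁻¹ * ∫⁻ α, w α * ∫⁻ v, ENNReal.ofReal (c * f α v) ∂ν α ∂m
      = ∫⁻ α, w α * ∫⁻ v, ENNReal.ofReal (f α v) ∂ν α ∂m := by
  rw [← lintegral_const_mul' _ _ ENNReal.ofReal_ne_top]
  refine lintegral_congr fun α => ?_
  rw [mul_left_comm, ← lintegral_const_mul' _ _ ENNReal.ofReal_ne_top]
  congr 1
  refine lintegral_congr fun v => ?_
  rw [← ENNReal.ofReal_mul (inv_nonneg.mpr hc.le), inv_mul_cancel_left₀ hc.ne']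

section TubeWalk

variable {Ω Λ : Type*} [MeasurableSpace Ω] [MeasurableSpace Λ]
  (μ : Ω → ℝ → Measure Λ) (φ : Ω → ℝ → Λ → ℝ → Λ → ℝ≥0∞)

noncomputable def jumpDensity (ω : Ω) (u : Λ) (β : ℝ) : ℝ≥0∞ :=
  ∫⁻ v, φ ω 0 u β v ∂μ ω β

variable [∀ ω α, IsFiniteMeasure (μ ω α)] {μ φ} {θ : ℝ → Ω → Ω}

theorem measurable_jumpDensity (hμ : Measurable fun p : Ω × ℝ => μ p.1 p.2)
    (hφ : Measurable fun p : Ω × ℝ × Λ × ℝ × Λ => φ p.1 p.2.1 p.2.2.1 p.2.2.2.1 p.2.2.2.2) :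
    Measurable fun p : Ω × Λ × ℝ => jumpDensity μ φ p.1 p.2.1 p.2.2 :=
  (hφ.comp (by fun_prop : Measurable fun q : (Ω × Λ × ℝ) × Λ =>
    (q.1.1, (0 : ℝ), q.1.2.1, q.1.2.2, q.2))).lintegral_prod_right_measure
    (m := fun p : Ω × Λ × ℝ => μ p.1 p.2.2)
    (hμ.comp (measurable_fst.prodMk measurable_snd.snd))

theorem lintegral_jumpDensity_flow_neg
    (hμθ : ∀ γ ω α, μ (θ γ ω) α = μ ω (α + γ))
    (hφθ : ∀ γ ω α u β v, φ (θ γ ω) α u β v = φ ω (α + γ) u (β + γ) v)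
    (hφsymm : ∀ ω α u β v, φ ω α u β v = φ ω β v α u)
    (hφ : Measurable fun p : Ω × ℝ × Λ × ℝ × Λ => φ p.1 p.2.1 p.2.2.1 p.2.2.2.1 p.2.2.2.2)
    (ω : Ω) (β : ℝ) :
    ∫⁻ u, jumpDensity μ φ (θ β ω) u (-β) ∂μ (θ β ω) 0 = ∫⁻ u, jumpDensity μ φ ω u β ∂μ ω 0 := by
  simp only [jumpDensity, hμθ, hφθ, zero_add, neg_add_cancel]
  simp_rw [hφsymm ω β _ 0]
  exact lintegral_lintegral_swap
    (hφ.comp (by fun_prop : Measurable fun q : Λ × Λ => (ω, (0 : ℝ), q.2, β, q.1))).aemeasurable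

theorem lintegral_lintegral_jumpDensity_neg (P : Measure Ω) (β : ℝ)
    (hθP : MeasurePreserving (θ β) P P)
    (hμ : Measurable fun p : Ω × ℝ => μ p.1 p.2)
    (hμθ : ∀ γ ω α, μ (θ γ ω) α = μ ω (α + γ))
    (hφθ : ∀ γ ω α u β v, φ (θ γ ω) α u β v = φ ω (α + γ) u (β + γ) v)
    (hφsymm : ∀ ω α u β v, φ ω α u β v = φ ω β v α u)
    (hφ : Measurable fun p : Ω × ℝ × Λ × ℝ × Λ => φ p.1 p.2.1 p.2.2.1 p.2.2.2.1 p.2.2.2.2) :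
    ∫⁻ ω, ∫⁻ u, jumpDensity μ φ ω u (-β) ∂μ ω 0 ∂P
      = ∫⁻ ω, ∫⁻ u, jumpDensity μ φ ω u β ∂μ ω 0 ∂P := by
  have hmeas : Measurable fun ω => ∫⁻ u, jumpDensity μ φ ω u (-β) ∂μ ω 0 :=
    ((measurable_jumpDensity hμ hφ).comp (by fun_prop : Measurable fun q : Ω × Λ =>
      (q.1, q.2, -β))).lintegral_prod_right_measure (m := fun ω => μ ω 0)
      (hμ.comp (measurable_id.prodMk measurable_const))
  rw [← hθP.lintegral_comp hmeas]
  exact lintegral_congr fun ω => lintegral_jumpDensity_flow_neg hμθ hφθ hφsymm hφ ω β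

theorem lintegral_lintegral_sq_mul_jumpDensity_eq_two_mul (P : Measure Ω) [SFinite P]
    (hθP : ∀ γ, MeasurePreserving (θ γ) P P)
    (hμ : Measurable fun p : Ω × ℝ => μ p.1 p.2)
    (hμθ : ∀ γ ω α, μ (θ γ ω) α = μ ω (α + γ))
    (hφθ : ∀ γ ω α u β v, φ (θ γ ω) α u β v = φ ω (α + γ) u (β + γ) v)
    (hφsymm : ∀ ω α u β v, φ ω α u β v = φ ω β v α u)
    (hφ : Measurable fun p : Ω × ℝ × Λ × ℝ × Λ => φ p.1 p.2.1 p.2.2.1 p.2.2.2.1 p.2.2.2.2) :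
    ∫⁻ ω, ∫⁻ u, (∫⁻ α, ENNReal.ofReal (α ^ 2) * jumpDensity μ φ ω u α) ∂μ ω 0 ∂P
      = 2 * ∫⁻ ω, ∫⁻ u, (∫⁻ α in Ioi 0, ENNReal.ofReal (α ^ 2) * jumpDensity μ φ ω u α)
          ∂μ ω 0 ∂P := by
  let k₀ : Kernel Ω Λ := ⟨fun ω => μ ω 0, hμ.comp (measurable_id.prodMk measurable_const)⟩
  have := k₀.isSFiniteKernel_of_isFiniteMeasure
  set G : Ω × Λ → ℝ → ℝ≥0∞ := fun p α => ENNReal.ofReal (α ^ 2) * jumpDensity μ φ p.1 p.2 α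
  have hG : Measurable (Function.uncurry G) :=
    (by fun_prop : Measurable fun q : (Ω × Λ) × ℝ => ENNReal.ofReal (q.2 ^ 2)).mul
      ((measurable_jumpDensity hμ hφ).comp
        (by fun_prop : Measurable fun q : (Ω × Λ) × ℝ => (q.1.1, q.1.2, q.2)))
  have hcompProd (f : Ω × Λ → ℝ≥0∞) (hf : Measurable f) :
      ∫⁻ ω, ∫⁻ u, f (ω, u) ∂μ ω 0 ∂P = ∫⁻ p, f p ∂(P ⊗ₘ k₀) :=
    (Measure.lintegral_compProd (μ := P) (κ := k₀) hf).symm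
  have hGneg (β : ℝ) : ∫⁻ p, G p (-β) ∂(P ⊗ₘ k₀) = ∫⁻ p, G p β ∂(P ⊗ₘ k₀) := by
    have hG' (α : ℝ) : Measurable fun p => G p α := hG.comp measurable_prodMk_right
    rw [← hcompProd _ (hG' (-β)), ← hcompProd _ (hG' β)]
    simp only [G, neg_sq, lintegral_const_mul' _ _ ENNReal.ofReal_ne_top]
    rw [lintegral_lintegral_jumpDensity_neg P β (hθP β) hμ hμθ hφθ hφsymm hφ]
  calc _ = ∫⁻ p, (∫⁻ α, G p α) ∂(P ⊗ₘ k₀) := hcompProd _ hG.lintegral_prod_right'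
    _ = 2 * ∫⁻ p, (∫⁻ α in Ioi 0, G p α) ∂(P ⊗ₘ k₀) :=
      lintegral_lintegral_eq_two_mul_lintegral_setLIntegral_Ioi _ hG hGneg
    _ = _ := congrArg (2 * ·) (hcompProd _ hG.lintegral_prod_right').symm

end TubeWalk


theorem second_moment_cocycle_KQ_general
    {d : ℕ}
    (Λ : Set (EuclideanSpace ℝ (Fin (d + 1))))
    {Ω : Type*} [MeasurableSpace Ω] (P : Measure Ω) [IsProbabilityMeasure P]
    (θ : ℝ → Ω → Ω)
    (hθP : ∀ γ : ℝ, MeasurePreserving (θ γ) P P)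
    (μ : Ω → ℝ → Measure Λ)
    (hμfin : ∀ ω α, IsFiniteMeasure (μ ω α))
    (hμmeas : ∀ s : Set Λ, MeasurableSet s → Measurable fun p : Ω × ℝ => μ p.1 p.2 s)
    (hμshift : ∀ γ ω α, μ (θ γ ω) α = μ ω (α + γ))
    (κ : Ω → ℝ → Λ → ℝ)
    (hκmem : ∀ ω α u, κ ω α u ∈ Set.Ioc (0 : ℝ) 1)
    (Φ : Ω → ℝ → Λ → ℝ → Λ → ℝ)
    (hΦmeas : Measurable fun p : Ω × ℝ × Λ × ℝ × Λ =>
      Φ p.1 p.2.1 p.2.2.1 p.2.2.2.1 p.2.2.2.2)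
    (hΦsymm : ∀ ω α u β v, Φ ω α u β v = Φ ω β v α u)
    (hΦshift : ∀ γ ω α u β v, Φ (θ γ ω) α u β v = Φ ω (α + γ) u (β + γ) v)
    (Z : ℝ)
    :
    ((ENNReal.ofReal Z)⁻¹ * (∫⁻ ω, (∫⁻ u, ENNReal.ofReal ((κ ω 0 u)⁻¹) *
        (∫⁻ α in Set.Ioi (0 : ℝ), ENNReal.ofReal (α ^ 2) *
          (∫⁻ v, ENNReal.ofReal (κ ω 0 u * Φ ω 0 u α v) ∂(μ ω α))) ∂(μ ω 0)) ∂P)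
      =
    2⁻¹ * ((ENNReal.ofReal Z)⁻¹ * (∫⁻ ω, (∫⁻ u, ENNReal.ofReal ((κ ω 0 u)⁻¹) *
        (∫⁻ α : ℝ, ENNReal.ofReal (α ^ 2) *
          (∫⁻ v, ENNReal.ofReal (κ ω 0 u * Φ ω 0 u α v) ∂(μ ω α))) ∂(μ ω 0)) ∂P)))
    ∧
    (((ENNReal.ofReal Z)⁻¹ * (∫⁻ ω, (∫⁻ u, ENNReal.ofReal ((κ ω 0 u)⁻¹) *
        (∫⁻ α : ℝ, ENNReal.ofReal (α ^ 2) *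
          (∫⁻ v, ENNReal.ofReal (κ ω 0 u * Φ ω 0 u α v) ∂(μ ω α))) ∂(μ ω 0)) ∂P)) < ⊤ →
      ((ENNReal.ofReal Z)⁻¹ * (∫⁻ ω, (∫⁻ u, ENNReal.ofReal ((κ ω 0 u)⁻¹) *
        (∫⁻ α in Set.Ioi (0 : ℝ), ENNReal.ofReal (α ^ 2) *
          (∫⁻ v, ENNReal.ofReal (κ ω 0 u * Φ ω 0 u α v) ∂(μ ω α))) ∂(μ ω 0)) ∂P)) < ⊤) := by
  have := hμfin
  have hcancel (ω : Ω) (u : Λ) (m : Measure ℝ) :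
      ENNReal.ofReal (κ ω 0 u)⁻¹ * ∫⁻ α, ENNReal.ofReal (α ^ 2) *
          ∫⁻ v, ENNReal.ofReal (κ ω 0 u * Φ ω 0 u α v) ∂μ ω α ∂m
        = ∫⁻ α, ENNReal.ofReal (α ^ 2) *
          jumpDensity μ (fun ω α u β v => ENNReal.ofReal (Φ ω α u β v)) ω u α ∂m :=
    ofReal_inv_mul_lintegral_mul_lintegral_ofReal_mul (hκmem ω 0 u).1 m (μ ω) _ _
  simp only [hcancel]
  rw [lintegral_lintegral_sq_mul_jumpDensity_eq_two_mul P hθP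
      (Measure.measurable_of_measurable_coe _ hμmeas) hμshift
      (fun γ ω α u β v => congrArg ENNReal.ofReal (hΦshift γ ω α u β v))
      (fun ω α u β v => congrArg ENNReal.ofReal (hΦsymm ω α u β v)) hΦmeas.ennreal_ofReal,
    mul_left_comm _ (2 : ℝ≥0∞), ENNReal.inv_mul_cancel_left two_ne_zero ENNReal.ofNat_ne_top]
  exact ⟨rfl, (le_mul_of_one_le_left' one_le_two).trans_lt⟩

/-- **Identity (3.20): second moment of the position cocycle under `KQ`.**
With `a(ω,u,α,v) = α`, one has `⟨a²⟩_{KQ} = (1/2)⟨b⟩_Q` as an equality in `[0,∞]`;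
in particular if `⟨b⟩_Q < ∞` then `a ∈ L²(KQ)`. -/
theorem second_moment_cocycle_KQ
    {d : ℕ}
    (Λ : Set (EuclideanSpace ℝ (Fin (d + 1)))) (hΛ : IsCompact Λ)
    {Ω : Type*} [MeasurableSpace Ω] (P : Measure Ω) [IsProbabilityMeasure P]
    (θ : ℝ → Ω → Ω)
    (hθmeas : Measurable fun p : ℝ × Ω => θ p.1 p.2)
    (hθ0 : θ 0 = id)
    (hθadd : ∀ γ γ' : ℝ, θ (γ + γ') = θ γ ∘ θ γ')
    (hθP : ∀ γ : ℝ, MeasurePreserving (θ γ) P P)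
    (μ : Ω → ℝ → Measure Λ)
    (hμfin : ∀ ω α, IsFiniteMeasure (μ ω α))
    (hμmeas : ∀ s : Set Λ, MeasurableSet s → Measurable fun p : Ω × ℝ => μ p.1 p.2 s)
    (hμshift : ∀ γ ω α, μ (θ γ ω) α = μ ω (α + γ))
    (κ : Ω → ℝ → Λ → ℝ)
    (hκmeas : Measurable fun p : Ω × ℝ × Λ => κ p.1 p.2.1 p.2.2)
    (hκmem : ∀ ω α u, κ ω α u ∈ Set.Ioc (0 : ℝ) 1)
    (hκshift : ∀ γ ω α u, κ (θ γ ω) α u = κ ω (α + γ) u)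
    (Φ : Ω → ℝ → Λ → ℝ → Λ → ℝ)
    (hΦmeas : Measurable fun p : Ω × ℝ × Λ × ℝ × Λ =>
      Φ p.1 p.2.1 p.2.2.1 p.2.2.2.1 p.2.2.2.2)
    (hΦnonneg : ∀ ω α u β v, 0 ≤ Φ ω α u β v)
    (hΦsymm : ∀ ω α u β v, Φ ω α u β v = Φ ω β v α u)
    (hΦshift : ∀ γ ω α u β v, Φ (θ γ ω) α u β v = Φ ω (α + γ) u (β + γ) v)
    (hΦnorm : ∀ ω α, ∀ᵐ u ∂(μ ω α),
      (∫ β : ℝ, ∫ v, κ ω α u * Φ ω α u β v ∂(μ ω β)) = 1)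
    (Z : ℝ) (hZpos : 0 < Z)
    (hZ : Z = ∫ ω, ∫ u, (κ ω 0 u)⁻¹ ∂(μ ω 0) ∂P)
    :
    ((ENNReal.ofReal Z)⁻¹ * (∫⁻ ω, (∫⁻ u, ENNReal.ofReal ((κ ω 0 u)⁻¹) *
        (∫⁻ α in Set.Ioi (0 : ℝ), ENNReal.ofReal (α ^ 2) *
          (∫⁻ v, ENNReal.ofReal (κ ω 0 u * Φ ω 0 u α v) ∂(μ ω α))) ∂(μ ω 0)) ∂P)
      =
    2⁻¹ * ((ENNReal.ofReal Z)⁻¹ * (∫⁻ ω, (∫⁻ u, ENNReal.ofReal ((κ ω 0 u)⁻¹) *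
        (∫⁻ α : ℝ, ENNReal.ofReal (α ^ 2) *
          (∫⁻ v, ENNReal.ofReal (κ ω 0 u * Φ ω 0 u α v) ∂(μ ω α))) ∂(μ ω 0)) ∂P)))
    ∧
    (((ENNReal.ofReal Z)⁻¹ * (∫⁻ ω, (∫⁻ u, ENNReal.ofReal ((κ ω 0 u)⁻¹) *
        (∫⁻ α : ℝ, ENNReal.ofReal (α ^ 2) *
          (∫⁻ v, ENNReal.ofReal (κ ω 0 u * Φ ω 0 u α v) ∂(μ ω α))) ∂(μ ω 0)) ∂P)) < ⊤ →
      ((ENNReal.ofReal Z)⁻¹ * (∫⁻ ω, (∫⁻ u, ENNReal.ofReal ((κ ω 0 u)⁻¹) *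
        (∫⁻ α in Set.Ioi (0 : ℝ), ENNReal.ofReal (α ^ 2) *
          (∫⁻ v, ENNReal.ofReal (κ ω 0 u * Φ ω 0 u α v) ∂(μ ω α))) ∂(μ ω 0)) ∂P)) < ⊤) :=
  second_moment_cocycle_KQ_general Λ P θ hθP μ hμfin hμmeas hμshift κ hκmem Φ hΦmeas hΦsymm hΦshift
    Z
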